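/- Let m ≥ 2, h > 0, and let g : [0,∞) → ℝ be continuously differentiable. For U ∈ ℝ^m let A(U) be the m×m tridiagonal matrix with entries a_{i,i+1} = a_{i+1,i} = g_i/h² where g_i = g((U_{i+1} − U_i)²/h²), a_{i,i} = −(g_{i−1} + g_i)/h² for 2 ≤ i ≤ m−1, a_{1,1} = −g_1/h², a_{m,m} = −g_{m−1}/h², and a_{i,j} = 0 otherwise, and define f : ℝ^m → ℝ^m by f(U) = A(U)·U. Then f is differentiable at every U, and its Jacobian matrix at U equals A(U) + C(U), where C(U) is the symmetric tridiagonal matrix with entries c_{i,i+1} = c_{i+1,i} = (2/h⁴)·g'_i·(U_{i+1} − U_i)² for i = 1,…,m−1, c_{i,i} = −(2/h⁴)·[g'_i·(U_{i+1} − U_i)² + g'_{i−1}·(U_i − U_{i−1})²] for i = 2,…,m−1, c_{1,1} = −(2/h⁴)·g'_1·(U_2 − U_1)², c_{m,m} = −(2/h⁴)·g'_{m−1}·(U_m − U_{m−1})², and c_{i,j} = 0 otherwise, with g'_i = g'((U_{i+1} − U_i)²/h²). -/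

import Mathlib

/-- The tridiagonal matrix `A(U)` of the 1-D semi-discretization (0-based
indices): `a_{i,i+1} = a_{i+1,i} = g_i/h²` with
`g_i = g((U_{i+1} − U_i)²/h²)`, diagonal entries
`a_{i,i} = −(g_{i−1} + g_i)/h²` (dropping `g_{i−1}` in the first row and `g_i`
in the last row, reflecting the Neumann boundary conditions), and `0` elsewhere. -/
noncomputable def diffMat (m : ℕ) (h : ℝ) (g : ℝ → ℝ) (U : Fin m → ℝ) :
    Matrix (Fin m) (Fin m) ℝ := fun i j =>
  let V : ℕ → ℝ := fun l => if hl : l < m then U ⟨l, hl⟩ else 0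
  let gg : ℕ → ℝ := fun l => g ((V (l + 1) - V l) ^ 2 / h ^ 2)
  if (j : ℕ) = (i : ℕ) + 1 then gg (i : ℕ) / h ^ 2
  else if (i : ℕ) = (j : ℕ) + 1 then gg (j : ℕ) / h ^ 2
  else if i = j then
    -(((if 0 < (i : ℕ) then gg ((i : ℕ) - 1) else 0) +
       (if (i : ℕ) + 1 < m then gg (i : ℕ) else 0)) / h ^ 2)
  else 0

/-- The symmetric tridiagonal matrix `C(U)` (0-based indices):
`c_{i,i+1} = c_{i+1,i} = (2/h⁴)·g'_i·(U_{i+1} − U_i)²` with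
`g'_i = g'((U_{i+1} − U_i)²/h²)`, diagonal entries
`c_{i,i} = −(2/h⁴)·[g'_{i−1}·(U_i − U_{i−1})² + g'_i·(U_{i+1} − U_i)²]`
(dropping the `i−1` term in the first row and the `i` term in the last row),
and `0` elsewhere. -/
noncomputable def jacC (m : ℕ) (h : ℝ) (g : ℝ → ℝ) (U : Fin m → ℝ) :
    Matrix (Fin m) (Fin m) ℝ := fun i j =>
  let V : ℕ → ℝ := fun l => if hl : l < m then U ⟨l, hl⟩ else 0
  let t : ℕ → ℝ := fun l => deriv g ((V (l + 1) - V l) ^ 2 / h ^ 2) * (V (l + 1) - V l) ^ 2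
  if (j : ℕ) = (i : ℕ) + 1 then 2 / h ^ 4 * t (i : ℕ)
  else if (i : ℕ) = (j : ℕ) + 1 then 2 / h ^ 4 * t (j : ℕ)
  else if i = j then
    -(2 / h ^ 4) * ((if 0 < (i : ℕ) then t ((i : ℕ) - 1) else 0) +
       (if (i : ℕ) + 1 < m then t (i : ℕ) else 0))
  else 0

/-!
Write `δ_k W = W_{k+1} - W_k` and `e_k` for the vector with `1` at `k` and `-1` at `k+1`. The
matrix `A(W)` is minus the path Laplacian with edge weights `ψ(δ_k W)`, `ψ(s) = g(s²/h²)/h²`, i.e.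
`A(W) = -∑ₖ ψ(δ_k W) e_k e_kᵀ`, so `A(W)·W = ∑ₖ ψ(δ_k W) δ_k W • e_k`. Each summand is a differentiable
function of the single coordinate `δ_k W`, with derivative `(ψ(s) + ψ'(s) s) δ_k • e_k` at
`s = δ_k U`; the term `ψ'(s) s = (2/h⁴) g'(s²/h²) s²` is the edge weight of `C(U)`.
-/

open Finset Matrix

noncomputable def edgeDiff (m k : ℕ) : (Fin m → ℝ) →L[ℝ] ℝ :=
  (if hk : k + 1 < m then ContinuousLinearMap.proj ⟨k + 1, hk⟩ else 0) -
    (if hk : k < m then ContinuousLinearMap.proj ⟨k, hk⟩ else 0)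

lemma edgeDiff_apply (m k : ℕ) (W : Fin m → ℝ) :
    edgeDiff m k W =
      (if hk : k + 1 < m then W ⟨k + 1, hk⟩ else 0) - (if hk : k < m then W ⟨k, hk⟩ else 0) := by
  unfold edgeDiff
  split_ifs <;> simp

lemma sum_ite_val_eq_mul (m n : ℕ) (V : Fin m → ℝ) :
    ∑ i : Fin m, (if (i : ℕ) = n then 1 else 0) * V i = if h : n < m then V ⟨n, h⟩ else 0 := by
  split_ifs with h
  · rw [sum_eq_single ⟨n, h⟩ (fun j _ hj => by rw [if_neg (fun e => hj (Fin.ext e)), zero_mul])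
      (by simp)]
    simp
  · exact sum_eq_zero fun i _ => by rw [if_neg (by omega), zero_mul]

def edgeVec (m k : ℕ) : Fin m → ℝ := fun i =>
  (if (i : ℕ) = k then 1 else 0) - (if (i : ℕ) = k + 1 then 1 else 0)

lemma edgeVec_dotProduct (m k : ℕ) (V : Fin m → ℝ) : edgeVec m k ⬝ᵥ V = -edgeDiff m k V := by
  simp only [dotProduct, edgeVec, sub_mul, sum_sub_distrib, sum_ite_val_eq_mul, edgeDiff_apply]
  ring

lemma sum_mul_edgeVec (m : ℕ) (a : ℕ → ℝ) (i : Fin m) :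
    ∑ k ∈ range (m - 1), a k * edgeVec m k i =
      (if (i : ℕ) + 1 < m then a i else 0) - (if 0 < (i : ℕ) then a (i - 1) else 0) := by
  have := i.isLt
  simp only [edgeVec, mul_sub, mul_ite, mul_one, mul_zero, sum_sub_distrib]
  congr 1
  · simp [Nat.lt_sub_iff_add_lt]
  · rcases Nat.eq_zero_or_pos (i : ℕ) with hi | hi
    · simp [hi]
    · rw [if_pos hi, sum_eq_single ((i : ℕ) - 1) (fun k _ hk => if_neg (by omega))
        (fun hk => absurd (mem_range.2 (by omega)) hk), if_pos (by omega)]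

/-- Minus the graph Laplacian of the path `0 — 1 — ⋯ — (m-1)` whose edge `k — k+1` has weight
`c k`. -/
def pathLaplacian (m : ℕ) (c : ℕ → ℝ) : Matrix (Fin m) (Fin m) ℝ := fun i j =>
  if (j : ℕ) = (i : ℕ) + 1 then c i
  else if (i : ℕ) = (j : ℕ) + 1 then c j
  else if i = j then
    -((if 0 < (i : ℕ) then c (i - 1) else 0) + (if (i : ℕ) + 1 < m then c i else 0))
  else 0

lemma pathLaplacian_add (m : ℕ) (c d : ℕ → ℝ) :
    pathLaplacian m (c + d) = pathLaplacian m c + pathLaplacian m d := by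
  ext i j
  simp only [pathLaplacian, Pi.add_apply, Matrix.add_apply]
  split_ifs <;> ring

lemma pathLaplacian_apply (m : ℕ) (c : ℕ → ℝ) (i j : Fin m) :
    pathLaplacian m c i j = -∑ k ∈ range (m - 1), c k * edgeVec m k i * edgeVec m k j := by
  simp only [mul_right_comm _ (edgeVec m _ i), sum_mul_edgeVec]
  have := i.isLt
  simp only [pathLaplacian, edgeVec, Fin.ext_iff]
  split_ifs <;> first | omega | ring1 | (rw [show (j : ℕ) = i - 1 by omega]; ring)

lemma pathLaplacian_mulVec (m : ℕ) (c : ℕ → ℝ) (V : Fin m → ℝ) :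
    pathLaplacian m c *ᵥ V = ∑ k ∈ range (m - 1), (c k * edgeDiff m k V) • edgeVec m k := by
  ext i
  simp only [mulVec, dotProduct, pathLaplacian_apply, neg_mul, sum_neg_distrib, sum_mul,
    Finset.sum_apply, Pi.smul_apply, smul_eq_mul]
  rw [sum_comm, ← sum_neg_distrib]
  refine sum_congr rfl fun k _ => ?_
  rw [← neg_neg (edgeDiff m k V), ← edgeVec_dotProduct, dotProduct,
    mul_neg, neg_mul, mul_sum, sum_mul]
  exact congrArg _ (sum_congr rfl fun j _ => by ring)

theorem hasFDerivAt_pathLaplacian_mulVec (m : ℕ) (ψ : ℝ → ℝ) (ψ' : ℕ → ℝ) (U : Fin m → ℝ)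
    (hψ : ∀ k, HasDerivAt ψ (ψ' k) (edgeDiff m k U)) :
    HasFDerivAt (fun W => pathLaplacian m (fun k => ψ (edgeDiff m k W)) *ᵥ W)
      ((pathLaplacian m (fun k => ψ (edgeDiff m k U) + ψ' k * edgeDiff m k U)).mulVecLin
        |>.toContinuousLinearMap) U := by
  have hflux : ∀ k, HasFDerivAt (fun W => (ψ (edgeDiff m k W) * edgeDiff m k W) • edgeVec m k)
      (((ψ' k * edgeDiff m k U + ψ (edgeDiff m k U) * 1) • edgeDiff m k).smulRight
        (edgeVec m k)) U :=
    fun k => (((hψ k).mul (hasDerivAt_id _)).comp_hasFDerivAt U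
      (edgeDiff m k).hasFDerivAt).smul_const (edgeVec m k)
  simp only [pathLaplacian_mulVec]
  refine (HasFDerivAt.fun_sum fun k _ => hflux k).congr_fderiv (ContinuousLinearMap.ext fun V => ?_)
  simp [pathLaplacian_mulVec, add_comm]

lemma diffMat_eq_pathLaplacian (m : ℕ) (h : ℝ) (g : ℝ → ℝ) (W : Fin m → ℝ) :
    diffMat m h g W = pathLaplacian m (fun k => g (edgeDiff m k W ^ 2 / h ^ 2) / h ^ 2) := by
  ext i j
  simp only [diffMat, pathLaplacian, edgeDiff_apply]
  split_ifs <;> ring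

lemma jacC_eq_pathLaplacian (m : ℕ) (h : ℝ) (g : ℝ → ℝ) (U : Fin m → ℝ) :
    jacC m h g U = pathLaplacian m
      (fun k => 2 / h ^ 4 * (deriv g (edgeDiff m k U ^ 2 / h ^ 2) * edgeDiff m k U ^ 2)) := by
  ext i j
  simp only [jacC, pathLaplacian, edgeDiff_apply]
  split_ifs <;> ring

theorem stmt13_general (m : ℕ) (h : ℝ)
    (g : ℝ → ℝ) (hg : ContDiff ℝ 1 g) (U : Fin m → ℝ) :
    HasFDerivAt (fun W : Fin m → ℝ => (diffMat m h g W).mulVec W)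
      (LinearMap.toContinuousLinearMap
        (diffMat m h g U + jacC m h g U).mulVecLin) U := by
  have hψ (s : ℝ) : HasDerivAt (fun s => g (s ^ 2 / h ^ 2) / h ^ 2)
      (deriv g (s ^ 2 / h ^ 2) * (2 * s / h ^ 2) / h ^ 2) s := by
    have hsq : HasDerivAt (fun s => s ^ 2 / h ^ 2) (2 * s / h ^ 2) s := by
      simpa using (hasDerivAt_pow 2 s).div_const (h ^ 2)
    exact ((hg.differentiable one_ne_zero _).hasDerivAt.comp s hsq).div_const _
  convert hasFDerivAt_pathLaplacian_mulVec m _ _ U (fun k => hψ _) using 3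
  · exact funext fun W => by rw [diffMat_eq_pathLaplacian]
  · rw [diffMat_eq_pathLaplacian, jacC_eq_pathLaplacian, ← pathLaplacian_add]
    congr 1
    funext k
    simp only [Pi.add_apply]
    ring

/-- For a `C¹` diffusivity `g`, the map `f(U) = A(U)·U` is
differentiable everywhere and its Jacobian (Fréchet derivative) at `U` is the
matrix `A(U) + C(U)`. -/
theorem stmt13 (m : ℕ) (hm : 2 ≤ m) (h : ℝ) (hh : 0 < h)
    (g : ℝ → ℝ) (hg : ContDiff ℝ 1 g) (U : Fin m → ℝ) :
    HasFDerivAt (fun W : Fin m → ℝ => (diffMat m h g W).mulVec W)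
      (LinearMap.toContinuousLinearMap
        (diffMat m h g U + jacC m h g U).mulVecLin) U :=
  stmt13_general m h g hg U
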